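/- arXiv:2205.03911 — 3 statements merged into one kernel-verified Lean document; each statement's English description precedes it below -/
import Mathlib

section
/- Fix an integer q ≥ 2 and an alphabet Σ_q of size q. Let n, ℓ, p, k be integers with p ≥ 2, ℓ ≥ 4p−7, k ≥ 1, k dividing n, ℓ ≤ n/k, and ℓ ≥ ⌈log_q(n/k − ℓ + 2)⌉ + p + 1. Then a_q(n + 3k − 2, ℓ, p) ≥ q^n; equivalently, there exists an injective map from Σ_q^n into A_q(n + 3k − 2, ℓ, p), i.e., an ℓ-window p-least-period avoiding code with 3k−2 redundancy symbols. -/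
/-- `p` is a period of the vector `s = (s_1, …, s_n)` (0-indexed here):
`s_i = s_{i+p}` for all valid indices. -/
def IsPeriod {α : Type*} {n : ℕ} (s : Fin n → α) (p : ℕ) : Prop :=
  ∀ i : ℕ, ∀ h : i + p < n,
    s ⟨i, lt_of_le_of_lt (Nat.le_add_right i p) h⟩ = s ⟨i + p, h⟩

/-- The window of length `ℓ` of `s` starting at (0-indexed) position `i`. -/
def window {α : Type*} {n : ℕ} (s : Fin n → α) (i ℓ : ℕ) (h : i + ℓ ≤ n) :
    Fin ℓ → α :=
  fun j => s ⟨i + j, Nat.lt_of_lt_of_le (Nat.add_lt_add_left j.isLt i) h⟩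

/-- `s` is an `ℓ`-window `p`-least-period avoiding vector: no window of
length `ℓ` has any period `p'` with `1 ≤ p' < p`. -/
def LPAvoiding {α : Type*} {n : ℕ} (ℓ p : ℕ) (s : Fin n → α) : Prop :=
  ∀ i : ℕ, ∀ h : i + ℓ ≤ n, ∀ p', 1 ≤ p' → p' < p →
    ¬ IsPeriod (window s i ℓ h) p'

/-- `s` is an `ℓ`-window `p`-period avoiding vector: no window of
length `ℓ` has period `p`. -/
def PAvoiding {α : Type*} {n : ℕ} (ℓ p : ℕ) (s : Fin n → α) : Prop :=
  ∀ i : ℕ, ∀ h : i + ℓ ≤ n, ¬ IsPeriod (window s i ℓ h) p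

/-- `s` satisfies the `k`-RLL constraint w.r.t. the zero symbol `z`:
no window of length `k` consists entirely of `z`. -/
def RLLok {α : Type*} {n : ℕ} (z : α) (k : ℕ) (s : Fin n → α) : Prop :=
  ∀ i : ℕ, ∀ h : i + k ≤ n, ∃ j : Fin k, window s i k h j ≠ z

/-!
Split the message into `k` blocks of length `b = n / k` and encode each block injectively as a
word of length `b + 1` all of whose `ℓ`-windows avoid the periods `1, …, p - 1`: a union bound
over windows and periods leaves at least `q ^ b` such words, and this is where the logarithmic
condition on `ℓ` enters. Consecutive blocks are glued by two separator symbols. With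
`σ = max (p - 1) (2p - 4)`, a window of length `ℓ ≥ 2σ + 1` that is not inside one block contains
the `σ` symbols before the first separator and that separator, or the second separator and the
`σ` symbols after it. By Fine–Wilf all periods `a < p` of such a stretch of `σ` symbols predict
the same symbol at the separator, so a separator chosen different from that symbol breaks every
period. The total length is `k (b + 3) - 2 = n + 3k - 2`.
-/

section Periods

variable {α : Type*}

def HasPeriodOn (f : ℕ → α) (i n p : ℕ) : Prop :=
  ∀ t, t + p < n → f (i + t) = f (i + (t + p))

variable {f g : ℕ → α} {i j n m a b : ℕ}

theorem HasPeriodOn.mono (h : HasPeriodOn f i n a) (hij : i ≤ j) (hjm : j + m ≤ i + n) :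
    HasPeriodOn f j m a := by
  intro t ht
  have := h (j - i + t) (by omega)
  rwa [show i + (j - i + t) = j + t by omega,
    show i + (j - i + t + a) = j + (t + a) by omega] at this

theorem HasPeriodOn.congr (h : HasPeriodOn f i n a) (hfg : ∀ t < n, f (i + t) = g (j + t)) :
    HasPeriodOn g j n a := fun t ht => by
  rw [← hfg t (by omega), ← hfg (t + a) ht]
  exact h t ht

theorem HasPeriodOn.eqOn_Ico (hf : HasPeriodOn f i n a) (hg : HasPeriodOn g i n a)
    (ha : 0 < a) (h : Set.EqOn f g (Set.Ico i (i + a))) : Set.EqOn f g (Set.Ico i (i + n)) := by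
  intro x hx
  induction x using Nat.strong_induction_on with
  | _ x ih =>
    obtain ⟨hix, hxn⟩ := hx
    by_cases hxa : x < i + a
    · exact h ⟨hix, hxa⟩
    · obtain ⟨t, rfl⟩ : ∃ t, x = i + (t + a) := ⟨x - i - a, by omega⟩
      rw [← hf t (by omega), ← hg t (by omega)]
      exact ih (i + t) (by omega) ⟨by omega, by omega⟩

/-- Fine–Wilf: two periods `a`, `b` of a window of length at least `a + b - gcd a b` predict the
same symbol right after the window. Euclid's descent: `a` and `b - a` are periods of the window
with its first `a` symbols removed. -/
theorem HasPeriodOn.apply_sub_eq (ha : HasPeriodOn f i n a) (hb : HasPeriodOn f i n b)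
    (ha0 : 0 < a) (hb0 : 0 < b) (hn : a + b - a.gcd b ≤ n) :
    f (i + n - a) = f (i + n - b) := by
  induction hs : a + b using Nat.strong_induction_on generalizing a b i n with
  | _ s ih =>
    wlog hab : a < b generalizing a b
    · rcases (not_lt.mp hab).eq_or_lt with rfl | hba
      · rfl
      · exact (this hb ha hb0 ha0 (by rwa [Nat.gcd_comm, Nat.add_comm]) (by omega) hba).symm
    have hga : a.gcd b ≤ a := Nat.gcd_le_left _ ha0
    have hsub : HasPeriodOn f (i + a) (n - a) (b - a) := fun t ht => by
      rw [show i + a + t = i + (t + a) by omega, ← ha t (by omega), hb t (by omega)]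
      congr 1
      omega
    have key := ih (a + (b - a)) (by omega) (ha.mono (by omega) (by omega)) hsub ha0
      (by omega) (by rw [Nat.gcd_sub_self_right hab.le]; omega) rfl
    rw [show i + a + (n - a) - a = i + n - a by omega,
      show i + a + (n - a) - (b - a) = i + (n - b + a) by omega] at key
    rw [key, ← ha (n - b) (by omega), show i + (n - b) = i + n - b by omega]

theorem HasPeriodOn.apply_add_sub_one_eq (ha : HasPeriodOn f i n a) (hb : HasPeriodOn f i n b)
    (ha0 : 0 < a) (hb0 : 0 < b) (hn : a + b - a.gcd b ≤ n) :
    f (i + a - 1) = f (i + b - 1) := by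
  have hrev : ∀ {c}, HasPeriodOn f i n c → HasPeriodOn (fun t => f (i + n - 1 - t)) 0 n c :=
    fun {c} hc t ht => by
      have := hc (n - 1 - t - c) (by omega)
      simp only [Nat.zero_add]
      rw [show i + n - 1 - t = i + (n - 1 - t - c + c) by omega,
        show i + n - 1 - (t + c) = i + (n - 1 - t - c) by omega, this]
  have key := (hrev ha).apply_sub_eq (hrev hb) ha0 hb0 hn
  have hgb : a.gcd b ≤ b := Nat.gcd_le_right _ hb0
  have hga : a.gcd b ≤ a := Nat.gcd_le_left _ ha0
  simp only [Nat.zero_add] at key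
  rwa [show i + n - 1 - (n - a) = i + a - 1 by omega,
    show i + n - 1 - (n - b) = i + b - 1 by omega] at key

end Periods

section Separators

variable {α : Type*}

theorem exists_forall_ne_of_forall_eq [Nontrivial α] {ι : Type*} {P : ι → Prop} (g : ι → α)
    (h : ∀ a b, P a → P b → g a = g b) : ∃ u, ∀ a, P a → u ≠ g a := by
  by_cases hP : ∃ a, P a
  · obtain ⟨a, ha⟩ := hP
    obtain ⟨u, hu⟩ := exists_ne (g a)
    exact ⟨u, fun b hb => h a b ha hb ▸ hu⟩
  · obtain ⟨u, -⟩ := exists_pair_ne α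
    exact ⟨u, fun a ha => (hP ⟨a, ha⟩).elim⟩

theorem add_sub_gcd_le_of_lt {p σ a b : ℕ} (hpσ : p ≤ σ + 1) (hσ : 2 * p - 4 ≤ σ)
    (ha : 0 < a) (hap : a < p) (hb : 0 < b) (hbp : b < p) : a + b - a.gcd b ≤ σ := by
  rcases eq_or_ne a b with rfl | hab
  · rw [Nat.gcd_self]
    omega
  · have := Nat.gcd_pos_of_pos_left b ha
    omega

variable (p σ : ℕ)

def BreaksPeriodsBefore (f : ℕ → α) (c : ℕ) : Prop :=
  ∀ a, 0 < a → a < p → HasPeriodOn f (c - σ) σ a → f c ≠ f (c - a)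

def BreaksPeriodsAfter (f : ℕ → α) (c : ℕ) : Prop :=
  ∀ a, 0 < a → a < p → HasPeriodOn f (c + 1) σ a → f c ≠ f (c + a)

variable {p σ}

/-- A window of length at least `2σ + 1` that meets the separator pair `c, c + 1` contains either
the `σ` symbols before `c` together with `c`, or `c + 1` together with the `σ` symbols after it. -/
theorem not_hasPeriodOn_of_breaksPeriods {f : ℕ → α} {c i ℓ a : ℕ}
    (hl : BreaksPeriodsBefore p σ f c) (hr : BreaksPeriodsAfter p σ f (c + 1))
    (hpσ : p ≤ σ + 1) (hℓ : 2 * σ + 1 ≤ ℓ) (hi : i ≤ c + 1) (hc : c < i + ℓ)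
    (ha : 0 < a) (hap : a < p) : ¬ HasPeriodOn f i ℓ a := by
  intro h
  by_cases hic : i + σ ≤ c
  · refine hl a ha hap (h.mono (by omega) (by omega)) ?_
    have := h (c - a - i) (by omega)
    rwa [show i + (c - a - i) = c - a by omega, show i + (c - a - i + a) = c by omega,
      eq_comm] at this
  · refine hr a ha hap (h.mono (by omega) (by omega)) ?_
    have := h (c + 1 - i) (by omega)
    rwa [show i + (c + 1 - i) = c + 1 by omega,
      show i + (c + 1 - i + a) = c + 1 + a by omega] at this

variable [Nontrivial α]

theorem exists_forall_ne_continuation (hpσ : p ≤ σ + 1) (hσ : 2 * p - 4 ≤ σ) {c : ℕ}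
    (hσc : σ ≤ c) : ∃ g : (ℕ → α) → α, ∀ f a, 0 < a → a < p →
      HasPeriodOn f (c - σ) σ a → g f ≠ f (c - a) := by
  choose g hg using fun f : ℕ → α => exists_forall_ne_of_forall_eq
    (P := fun a => 0 < a ∧ a < p ∧ HasPeriodOn f (c - σ) σ a) (fun a => f (c - a))
    fun a b ⟨ha, hap, hfa⟩ ⟨hb, hbp, hfb⟩ => by
      have := hfa.apply_sub_eq hfb ha hb (add_sub_gcd_le_of_lt hpσ hσ ha hap hb hbp)
      rwa [Nat.sub_add_cancel hσc] at this
  exact ⟨g, fun f a ha hap hfa => hg f a ⟨ha, hap, hfa⟩⟩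

theorem exists_forall_ne_backward_continuation (hpσ : p ≤ σ + 1) (hσ : 2 * p - 4 ≤ σ)
    (c : ℕ) : ∃ g : (ℕ → α) → α, ∀ f a, 0 < a → a < p →
      HasPeriodOn f c σ a → g f ≠ f (c + a - 1) := by
  choose g hg using fun f : ℕ → α => exists_forall_ne_of_forall_eq
    (P := fun a => 0 < a ∧ a < p ∧ HasPeriodOn f c σ a) (fun a => f (c + a - 1))
    fun a b ⟨ha, hap, hfa⟩ ⟨hb, hbp, hfb⟩ =>
      hfa.apply_add_sub_one_eq hfb ha hb (add_sub_gcd_le_of_lt hpσ hσ ha hap hb hbp)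
  exact ⟨g, fun f a ha hap hfa => hg f a ⟨ha, hap, hfa⟩⟩

end Separators

section Assembly

variable {α : Type*} (B : ℕ) (gl gr : (ℕ → α) → α)

/-- The blocks `X 0, X 1, …` of length `B`, block `X j` being followed by the separators
`gl (X j)` and `gr (X (j + 1))`; position `(B + 2) * j + t` holds symbol `t` of that group. -/
def assemble (X : ℕ → ℕ → α) (pos : ℕ) : α :=
  if pos % (B + 2) < B then X (pos / (B + 2)) (pos % (B + 2))
  else if pos % (B + 2) = B then gl (X (pos / (B + 2)))
  else gr (X (pos / (B + 2) + 1))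

variable {B gl gr} {X : ℕ → ℕ → α} {j t : ℕ}

theorem assemble_of_lt (ht : t < B + 2) :
    assemble B gl gr X ((B + 2) * j + t) =
      if t < B then X j t else if t = B then gl (X j) else gr (X (j + 1)) := by
  have hB : 0 < B + 2 := by omega
  rw [assemble, Nat.mul_add_mod, Nat.mod_eq_of_lt ht, Nat.mul_add_div hB, Nat.div_eq_of_lt ht,
    Nat.add_zero]

theorem assemble_block (ht : t < B) : assemble B gl gr X ((B + 2) * j + t) = X j t := by
  rw [assemble_of_lt (by omega), if_pos ht]

theorem assemble_left : assemble B gl gr X ((B + 2) * j + B) = gl (X j) := by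
  rw [assemble_of_lt (by omega), if_neg (lt_irrefl B), if_pos rfl]

theorem assemble_right : assemble B gl gr X ((B + 2) * j + (B + 1)) = gr (X (j + 1)) := by
  rw [assemble_of_lt (by omega), if_neg (by omega), if_neg (by omega)]

variable {p σ : ℕ}

theorem breaksPeriodsBefore_assemble (hpσ : p ≤ σ + 1) (hσB : σ ≤ B)
    (hgl : ∀ f a, 0 < a → a < p → HasPeriodOn f (B - σ) σ a → gl f ≠ f (B - a)) :
    BreaksPeriodsBefore p σ (assemble B gl gr X) ((B + 2) * j + B) := by
  intro a ha hap h
  rw [assemble_left, show (B + 2) * j + B - a = (B + 2) * j + (B - a) by omega,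
    assemble_block (by omega)]
  refine hgl (X j) a ha hap (h.congr fun s hs => ?_)
  rw [show (B + 2) * j + B - σ + s = (B + 2) * j + (B - σ + s) by omega,
    assemble_block (by omega)]

theorem breaksPeriodsAfter_assemble (hpσ : p ≤ σ + 1) (hσB : σ ≤ B)
    (hgr : ∀ f a, 0 < a → a < p → HasPeriodOn f 0 σ a → gr f ≠ f (a - 1)) :
    BreaksPeriodsAfter p σ (assemble B gl gr X) ((B + 2) * j + B + 1) := by
  intro a ha hap h
  rw [Nat.add_assoc, assemble_right,
    show (B + 2) * j + (B + 1) + a = (B + 2) * (j + 1) + (a - 1) by rw [Nat.mul_succ]; omega,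
    assemble_block (by omega)]
  refine hgr (X (j + 1)) a ha hap (h.congr fun s hs => ?_)
  rw [show (B + 2) * j + B + 1 + 1 + s = (B + 2) * (j + 1) + (0 + s) by rw [Nat.mul_succ]; omega,
    assemble_block (by omega)]

theorem assemble_not_hasPeriodOn {k ℓ : ℕ}
    (hX : ∀ j < k, ∀ i, i + ℓ ≤ B → ∀ a, 0 < a → a < p → ¬ HasPeriodOn (X j) i ℓ a)
    (hgl : ∀ f a, 0 < a → a < p → HasPeriodOn f (B - σ) σ a → gl f ≠ f (B - a))
    (hgr : ∀ f a, 0 < a → a < p → HasPeriodOn f 0 σ a → gr f ≠ f (a - 1))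
    (hpσ : p ≤ σ + 1) (hℓ : 2 * σ + 1 ≤ ℓ) (hσB : σ ≤ B)
    {i : ℕ} (hi : i + ℓ ≤ k * (B + 2) - 2) {a : ℕ} (ha : 0 < a) (hap : a < p) :
    ¬ HasPeriodOn (assemble B gl gr X) i ℓ a := by
  obtain ⟨j, t, ht, rfl⟩ : ∃ j t, t < B + 2 ∧ i = (B + 2) * j + t :=
    ⟨i / (B + 2), i % (B + 2), Nat.mod_lt _ (by omega), (Nat.div_add_mod i _).symm⟩
  by_cases htℓ : t + ℓ ≤ B
  · have hjk : j < k := by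
      by_contra! hkj
      have := Nat.mul_le_mul_left (B + 2) hkj
      rw [Nat.mul_comm] at this
      omega
    refine fun h => hX j hjk t htℓ a ha hap (h.congr fun s hs => ?_)
    rw [Nat.add_assoc, assemble_block (by omega)]
  · exact not_hasPeriodOn_of_breaksPeriods (c := (B + 2) * j + B)
      (breaksPeriodsBefore_assemble hpσ hσB hgl) (breaksPeriodsAfter_assemble hpσ hσB hgr)
      hpσ hℓ (by omega) (by omega) ha hap

end Assembly

section Counting

variable {α : Type*}

theorem isPeriod_window_iff {N : ℕ} (s : Fin N → α) {f : ℕ → α} (hf : ∀ t : Fin N, f t = s t)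
    {i ℓ a : ℕ} (h : i + ℓ ≤ N) : IsPeriod (window s i ℓ h) a ↔ HasPeriodOn f i ℓ a := by
  simp only [IsPeriod, HasPeriodOn, window, ← hf]

theorem lpAvoiding_iff {N ℓ p : ℕ} (s : Fin N → α) {f : ℕ → α} (hf : ∀ t : Fin N, f t = s t) :
    LPAvoiding ℓ p s ↔ ∀ i, i + ℓ ≤ N → ∀ a, 0 < a → a < p → ¬ HasPeriodOn f i ℓ a := by
  simp only [LPAvoiding, isPeriod_window_iff s hf, Nat.one_le_iff_ne_zero, Nat.pos_iff_ne_zero]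

variable [Fintype α]

theorem card_hasPeriodOn_le (d : α) {L i ℓ a : ℕ} (h : i + ℓ ≤ L) (ha : 0 < a) (haℓ : a ≤ ℓ) :
    Nat.card {x : Fin L → α // HasPeriodOn (Function.extend Fin.val x fun _ => d) i ℓ a} ≤
      Fintype.card α ^ (L - ℓ + a) := by
  -- such a word is determined by its symbols outside `[i + a, i + ℓ)`
  let keep : Fin (L - ℓ + a) → Fin L := fun r =>
    ⟨if r < i + a then r else r + (ℓ - a), by split_ifs <;> omega⟩
  have hext : ∀ (x : Fin L → α) (t : Fin L), Function.extend Fin.val x (fun _ => d) t = x t :=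
    fun x => Fin.val_injective.extend_apply x _
  have hinj : Function.Injective fun x : {x : Fin L → α //
      HasPeriodOn (Function.extend Fin.val x fun _ => d) i ℓ a} => x.1 ∘ keep := by
    rintro ⟨x, hx⟩ ⟨y, hy⟩ hxy
    have hkeep : ∀ t : Fin L, (t < i + a ∨ i + ℓ ≤ t) → x t = y t := by
      intro t ht
      let r : Fin (L - ℓ + a) := ⟨if t < i + a then t else t - (ℓ - a), by split_ifs <;> omega⟩
      have hr : keep r = t := Fin.ext (by simp only [keep, r]; split_ifs <;> omega)
      simpa only [Function.comp_apply, hr] using congrFun hxy r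
    have hwin := hx.eqOn_Ico hy ha fun t ⟨_, ht⟩ => by
      rw [hext x ⟨t, by omega⟩, hext y ⟨t, by omega⟩]
      exact hkeep _ (Or.inl ht)
    refine Subtype.ext (funext fun t => ?_)
    by_cases ht : t < i + a ∨ i + ℓ ≤ t
    · exact hkeep t ht
    · show x t = y t
      rw [← hext x, ← hext y]
      exact hwin ⟨by omega, by omega⟩
  calc _ ≤ Nat.card (Fin (L - ℓ + a) → α) := Nat.card_le_card_of_injective _ hinj
    _ = _ := by rw [Nat.card_eq_fintype_card, Fintype.card_fun, Fintype.card_fin]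

theorem pow_card_le_card_lpAvoiding_add [Nonempty α] {L ℓ p : ℕ} (hpℓ : p ≤ ℓ) :
    Fintype.card α ^ L ≤ Nat.card {x : Fin L → α // LPAvoiding ℓ p x} +
      (L + 1 - ℓ) * ∑ a ∈ Finset.Ioo 0 p, Fintype.card α ^ (L - ℓ + a) := by
  classical
  set E : (Fin L → α) → ℕ → α := fun x => Function.extend Fin.val x fun _ => Classical.arbitrary α
  have hE : ∀ x t, E x (t : Fin L) = x t := fun x => Fin.val_injective.extend_apply x _
  let bad (ia : ℕ × ℕ) := Finset.univ.filter fun x => HasPeriodOn (E x) ia.1 ℓ ia.2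
  have hcover : Finset.univ ⊆ Finset.univ.filter (fun x => LPAvoiding ℓ p x) ∪
      (Finset.range (L + 1 - ℓ) ×ˢ Finset.Ioo 0 p).biUnion bad := by
    intro x _
    by_cases hx : LPAvoiding ℓ p x
    · simp [hx]
    · simp only [lpAvoiding_iff x (hE x), not_forall, not_not] at hx
      obtain ⟨i, hi, a, ha, hap, hper⟩ := hx
      simp only [Finset.mem_union, Finset.mem_biUnion, Finset.mem_product, Finset.mem_range,
        Finset.mem_Ioo, Finset.mem_filter, Finset.mem_univ, true_and, bad]
      exact Or.inr ⟨(i, a), ⟨by omega, ha, hap⟩, hper⟩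
  have hbad : ∀ ia ∈ Finset.range (L + 1 - ℓ) ×ˢ Finset.Ioo 0 p,
      (bad ia).card ≤ Fintype.card α ^ (L - ℓ + ia.2) := by
    rintro ⟨i, a⟩ hia
    simp only [Finset.mem_product, Finset.mem_range, Finset.mem_Ioo] at hia
    rw [← Fintype.card_subtype, ← Nat.card_eq_fintype_card]
    exact card_hasPeriodOn_le _ (by omega) hia.2.1 (by omega)
  calc Fintype.card α ^ L = (Finset.univ : Finset (Fin L → α)).card := by simp
    _ ≤ _ := (Finset.card_le_card hcover).trans (Finset.card_union_le _ _)
    _ ≤ _ := by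
      rw [Nat.card_eq_fintype_card, Fintype.card_subtype]
      gcongr
      refine Finset.card_biUnion_le.trans ((Finset.sum_le_sum hbad).trans_eq ?_)
      simp only [Finset.sum_product, Finset.sum_const, Finset.card_range, smul_eq_mul]

theorem pow_le_card_lpAvoiding (hq : 2 ≤ Fintype.card α) {L ℓ p : ℕ}
    (hpℓ : p < ℓ) (hℓL : ℓ ≤ L + 1) (h : L + 2 - ℓ ≤ Fintype.card α ^ (ℓ - p - 1)) :
    Fintype.card α ^ L ≤ Nat.card {x : Fin (L + 1) → α // LPAvoiding ℓ p x} := by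
  have : Nonempty α := Fintype.card_pos_iff.mp (by omega)
  have hunion := pow_card_le_card_lpAvoiding_add (α := α) (L := L + 1) hpℓ.le
  set q := Fintype.card α
  have hgeom : ∑ a ∈ Finset.Ioo 0 p, q ^ (L + 1 - ℓ + a) ≤ q ^ (L + 1 - ℓ + p) := by
    simp only [pow_add, ← Finset.mul_sum]
    gcongr
    exact (Nat.geomSum_lt hq fun a ha => (Finset.mem_Ioo.1 ha).2).le
  have hbad : (L + 1 + 1 - ℓ) * ∑ a ∈ Finset.Ioo 0 p, q ^ (L + 1 - ℓ + a) ≤ q ^ L :=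
    calc _ ≤ q ^ (ℓ - p - 1) * q ^ (L + 1 - ℓ + p) := Nat.mul_le_mul h hgeom
      _ = q ^ L := by rw [← pow_add]; congr 1; omega
  have htotal : 2 * q ^ L ≤ q ^ (L + 1) := by
    rw [pow_succ']
    exact Nat.mul_le_mul_right _ hq
  omega

end Counting

theorem card_pow_le_card_lpAvoiding {α : Type*} [Finite α] [Nontrivial α] {B ℓ p : ℕ}
    (hpℓ : p < ℓ) (hℓ : 4 * p - 7 ≤ ℓ) (hℓB : ℓ ≤ B) (k : ℕ) :
    Nat.card {y : Fin B → α // LPAvoiding ℓ p y} ^ k ≤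
      Nat.card {s : Fin (k * (B + 2) - 2) → α // LPAvoiding ℓ p s} := by
  set σ := max (p - 1) (2 * p - 4)
  have hpσ : p ≤ σ + 1 := by omega
  have hσ : 2 * p - 4 ≤ σ := le_max_right _ _
  have hσℓ : 2 * σ + 1 ≤ ℓ := by omega
  have hσB : σ ≤ B := by omega
  obtain ⟨gl, hgl⟩ := exists_forall_ne_continuation (α := α) hpσ hσ hσB
  obtain ⟨gr, hgr⟩ := exists_forall_ne_backward_continuation (α := α) hpσ hσ 0
  obtain ⟨d⟩ := (inferInstance : Nonempty α)
  let X (x : Fin k → {y : Fin B → α // LPAvoiding ℓ p y}) : ℕ → ℕ → α :=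
    Function.extend Fin.val (fun j => Function.extend Fin.val (x j).1 fun _ => d) fun _ _ => d
  have hX : ∀ x (j : Fin k) (t : Fin B), X x j t = (x j).1 t := by
    simp [X, Fin.val_injective.extend_apply]
  let encode (x : Fin k → {y : Fin B → α // LPAvoiding ℓ p y}) :
      {s : Fin (k * (B + 2) - 2) → α // LPAvoiding ℓ p s} :=
    ⟨fun pos => assemble B gl gr (X x) pos, (lpAvoiding_iff _ fun _ => rfl).2
      fun _ hi _ ha hap => assemble_not_hasPeriodOn
        (fun j hj => (lpAvoiding_iff _ (hX x ⟨j, hj⟩)).1 (x ⟨j, hj⟩).2) hgl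
        (fun f a ha hap h => by simpa using hgr f a ha hap h) hpσ hσℓ hσB hi ha hap⟩
  have hinj : Function.Injective encode := by
    intro x y hxy
    funext j
    refine Subtype.ext (funext fun t => ?_)
    have hjk : (B + 2) * (j + 1) ≤ (B + 2) * k := Nat.mul_le_mul_left _ j.isLt
    rw [Nat.mul_succ, Nat.mul_comm (B + 2) k] at hjk
    have := congrFun (congrArg Subtype.val hxy) ⟨(B + 2) * j + t, by omega⟩
    simpa only [encode, assemble_block t.isLt, hX] using this
  calc _ = Nat.card (Fin k → {y : Fin B → α // LPAvoiding ℓ p y}) := by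
        rw [Nat.card_fun, Nat.card_fin]
    _ ≤ _ := Nat.card_le_card_of_injective encode hinj

theorem lpa_3k_redundancy_construction_general
    {q : ℕ} (hq : 2 ≤ q) (Sigma : Type*) [Fintype Sigma]
    (hcard : Fintype.card Sigma = q)
    (n ℓ p k : ℕ) (hl4p : 4 * p - 7 ≤ ℓ) (hkn : k ∣ n)
    (hlnk : ℓ ≤ n / k)
    (hℓ : ℓ ≥ ⌈Real.logb q (((n / k : ℕ) : ℝ) - (ℓ : ℝ) + 2)⌉₊ + p + 1) :
    Nat.card {s : Fin (n + 3 * k - 2) → Sigma // LPAvoiding ℓ p s} ≥ q ^ n := by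
  have : Nontrivial Sigma := Fintype.one_lt_card_iff_nontrivial.mp (by omega)
  obtain ⟨b, rfl⟩ := hkn
  have hk : 0 < k := Nat.pos_of_ne_zero fun hk => by simp [hk] at hlnk; omega
  rw [Nat.mul_div_cancel_left b hk] at hlnk hℓ
  have hlog : b + 2 - ℓ ≤ q ^ (ℓ - p - 1) := by
    rw [show (b : ℝ) - ℓ + 2 = ((b + 2 - ℓ : ℕ) : ℝ) by push_cast [show ℓ ≤ b + 2 by omega]; ring,
      Real.natCeil_logb_natCast] at hℓ
    exact (Nat.clog_le_iff_le_pow (by omega)).1 (by omega)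
  have hblock := pow_le_card_lpAvoiding (α := Sigma) (L := b) (by omega) (by omega) (by omega)
    (hcard ▸ hlog)
  have hglue := card_pow_le_card_lpAvoiding (α := Sigma) (B := b + 1) (by omega) hl4p (by omega) k
  rw [show k * (b + 1 + 2) = k * b + 3 * k by ring] at hglue
  calc q ^ (k * b) = (q ^ b) ^ k := by rw [Nat.mul_comm, pow_mul]
    _ ≤ _ := Nat.pow_le_pow_left (hcard ▸ hblock) k
    _ ≤ _ := hglue

/-- Construction 5: for `p ≥ 2`, `ℓ ≥ 4p−7`, `k ≥ 1`, `k ∣ n`, `ℓ ≤ n/k`, and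
`ℓ ≥ ⌈log_q(n/k − ℓ + 2)⌉ + p + 1`, we have `a_q(n + 3k − 2, ℓ, p) ≥ q^n`,
i.e. an `(ℓ,p)`-LPA code with `3k−2` redundancy symbols exists. -/
theorem lpa_3k_redundancy_construction
    {q : ℕ} (hq : 2 ≤ q) (Sigma : Type*) [Fintype Sigma]
    (hcard : Fintype.card Sigma = q)
    (n ℓ p k : ℕ) (hp : 2 ≤ p) (hl4p : 4 * p - 7 ≤ ℓ) (hk : 1 ≤ k) (hkn : k ∣ n)
    (hlnk : ℓ ≤ n / k)
    (hℓ : ℓ ≥ ⌈Real.logb q (((n / k : ℕ) : ℝ) - (ℓ : ℝ) + 2)⌉₊ + p + 1) :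
    Nat.card {s : Fin (n + 3 * k - 2) → Sigma // LPAvoiding ℓ p s} ≥ q ^ n :=
  lpa_3k_redundancy_construction_general hq Sigma hcard n ℓ p k hl4p hkn hlnk hℓ
end

section
/- Let V be a finite type, let D and S be subsets of V, and let f : V → V be a function that is injective on D (for all x, y ∈ D, f(x) = f(y) implies x = y) and satisfies f(x) ∉ S for all x ∈ D. Then for every s ∈ S there exists a natural number m such that the m-fold iterate f^[m](s) does not belong to D. (In particular, the process that starts at s and repeatedly applies f as long as the current element lies in D always terminates.) -/
/-- Abstract convergence of the iterative-repair encoder: if `f` is injective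
on `D` and maps `D` outside of `S`, then iterating `f` from any `s ∈ S`
eventually leaves `D`. -/
theorem repair_iteration_terminates
    {V : Type*} [Finite V] (D S : Set V) (f : V → V)
    (hinj : ∀ x ∈ D, ∀ y ∈ D, f x = f y → x = y)
    (hS : ∀ x ∈ D, f x ∉ S) :
    ∀ s ∈ S, ∃ m : ℕ, f^[m] s ∉ D := by
  intro s hs
  by_contra hcon
  push_neg at hcon
  -- cancellation: if all iterates are in D, equal iterates force equal shifts
  have cancel : ∀ m k : ℕ, f^[m] s = f^[m + k] s → s = f^[k] s := by
    intro m
    induction m with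
    | zero => intro k h; simpa using h
    | succ m ih =>
      intro k h
      apply ih
      have h1 : f (f^[m] s) = f (f^[m + k] s) := by
        have := h
        rw [show m + 1 = m + 1 from rfl] at this
        simpa only [Function.iterate_succ_apply', Nat.add_right_comm m 1 k] using h
      exact hinj _ (hcon m) _ (hcon (m + k)) h1
  -- finiteness gives a repeat
  have : ¬ Function.Injective (fun m : ℕ => f^[m] s) := by
    intro hi
    have : Function.Injective ((fun m : ℕ => f^[m] s)) := hi
    exact Set.infinite_range_of_injective this (Set.toFinite _)
  rw [Function.not_injective_iff] at this
  obtain ⟨a, b, hab, hne⟩ := this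
  wlog hlt : a < b generalizing a b
  · exact this b a hab.symm hne.symm (by omega)
  obtain ⟨k, hk, rfl⟩ : ∃ k, 0 < k ∧ b = a + k := ⟨b - a, by omega, by omega⟩
  have hsk := cancel a k hab
  obtain ⟨k', rfl⟩ : ∃ k', k = k' + 1 := ⟨k - 1, by omega⟩
  have : f (f^[k'] s) ∈ S := by
    have : f^[k' + 1] s ∈ S := hsk ▸ hs
    simpa only [Function.iterate_succ_apply'] using this
  exact hS _ (hcon k') this
end

section
/- Let V be a finite type, let D and S be subsets of V, and let f : V → V be a function that is injective on D (for all x, y ∈ D, f(x) = f(y) implies x = y) and satisfies f(x) ∉ S for all x ∈ D. For s ∈ S, let t(s) denote the least natural number m such that f^[m](s) ∉ D (which exists). Then Σ_{s ∈ S} t(s) ≤ |V| − |S|. (In particular, the average of t(s) over s ∈ S is at most (|V| − |S|)/|S|.) -/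
/-
The pairs `(s, m)` with `s ∈ S` and `m < t s` are sent injectively into the complement of `S`
by `(s, m) ↦ f^[m + 1] s`: the image avoids `S` because `f` maps `D` outside `S`, and two pairs
with the same image have the same start, since `f` can be cancelled along orbit segments inside `D`
and a shorter segment cannot end at a point of `S`. Hence `∑ t s ≤ |Sᶜ| = |V| - |S|`.
-/

section OrbitSegments

variable {α : Type*} {f : α → α} {D : Set α}

theorem Set.InjOn.eq_of_iterate_eq (hf : D.InjOn f) :
    ∀ {k : ℕ} {x y : α}, (∀ j < k, f^[j] x ∈ D) → (∀ j < k, f^[j] y ∈ D) →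
      f^[k] x = f^[k] y → x = y
  | 0, _, _, _, _, h => h
  | k + 1, x, y, hx, hy, h => by
    refine hf.eq_of_iterate_eq (k := k) (fun j hj => hx j (by omega))
      (fun j hj => hy j (by omega)) ?_
    rw [Function.iterate_succ_apply', Function.iterate_succ_apply'] at h
    exact hf (hx k k.lt_succ_self) (hy k k.lt_succ_self) h

theorem eq_of_iterate_succ_eq_of_mapsTo_compl {S : Set α} (hf : D.InjOn f)
    (hS : Set.MapsTo f D Sᶜ) {s s' : α} (hs : s ∈ S) (hs' : s' ∈ S) {m m' : ℕ}
    (hm : ∀ j ≤ m, f^[j] s ∈ D) (hm' : ∀ j ≤ m', f^[j] s' ∈ D)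
    (heq : f^[m + 1] s = f^[m' + 1] s') : s = s' ∧ m = m' := by
  wlog hle : m ≤ m' generalizing s s' m m'
  · exact (this hs' hs hm' hm heq.symm (by omega)).imp Eq.symm Eq.symm
  obtain ⟨d, rfl⟩ := Nat.exists_eq_add_of_le hle
  have hshift : f^[m + d + 1] s' = f^[m + 1] (f^[d] s') := by
    rw [← Function.iterate_add_apply, Nat.add_right_comm]
  have hs_eq : s = f^[d] s' :=
    hf.eq_of_iterate_eq (fun j hj => hm j (by omega))
      (fun j hj => by rw [← Function.iterate_add_apply]; exact hm' _ (by omega))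
      (heq.trans hshift)
  cases d with
  | zero => exact ⟨hs_eq, rfl⟩
  | succ e =>
    rw [Function.iterate_succ_apply'] at hs_eq
    exact absurd (hs_eq ▸ hs) (hS (hm' e (by omega)))

end OrbitSegments

/-- Abstract average-iteration bound: if `f` is injective on `D` and maps `D`
outside of `S`, and `t s` is the least `m` with `f^[m] s ∉ D`, then
`Σ_{s ∈ S} t(s) ≤ |V| − |S|`. -/
theorem repair_iteration_sum_bound
    {V : Type*} [Fintype V] (D : Set V) (S : Finset V) (f : V → V)
    (hinj : ∀ x ∈ D, ∀ y ∈ D, f x = f y → x = y)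
    (hS : ∀ x ∈ D, f x ∉ S)
    (t : V → ℕ)
    (ht : ∀ s ∈ S, f^[t s] s ∉ D ∧ ∀ m < t s, f^[m] s ∈ D) :
    ∑ s ∈ S, t s ≤ Fintype.card V - S.card := by
  classical
  have hf : D.InjOn f := fun x hx y hy => hinj x hx y hy
  have hmaps : Set.MapsTo f D (↑S)ᶜ := fun x hx => hS x hx
  have hmem {s : V} (hs : s ∈ S) {m : ℕ} (hm : m < t s) : ∀ j ≤ m, f^[j] s ∈ D :=
    fun j hj => (ht s hs).2 j (by omega)
  calc ∑ s ∈ S, t s = (S.sigma fun s => Finset.range (t s)).card := by simp [Finset.card_sigma]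
    _ ≤ Sᶜ.card := by
      refine Finset.card_le_card_of_injOn (fun p => f^[p.2 + 1] p.1) ?_ ?_
      · rintro ⟨s, m⟩ hp
        simp only [Finset.coe_sigma, Set.mem_sigma_iff, Finset.mem_coe, Finset.mem_range] at hp
        simpa [Function.iterate_succ_apply'] using hS _ (hmem hp.1 hp.2 m le_rfl)
      · rintro ⟨s, m⟩ hp ⟨s', m'⟩ hp' heq
        simp only [Finset.coe_sigma, Set.mem_sigma_iff, Finset.mem_coe, Finset.mem_range] at hp hp'
        obtain ⟨rfl, rfl⟩ := eq_of_iterate_succ_eq_of_mapsTo_compl hf hmaps hp.1 hp'.1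
          (hmem hp.1 hp.2) (hmem hp'.1 hp'.2) heq
        rfl
    _ = Fintype.card V - S.card := Finset.card_compl S
end
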